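/- Let f : D(A) → D(B) be a spherical functor with left adjoint f^L, right adjoint f^R, and cotwist c_f (defined by the triangle c_f → id → f^R f), and let σ : f^R f → c_f[1] be the map arising from the cotwist triangle. Under the canonical isomorphism f^R ≅ c_f f^L[1] (given by f^R → f^R f f^L → c_f f^L[1]), the composite f^R f → f^R f f^L f → c_f f^L f[1] → c_f[1] (unit of f^L ⊣ f, then σ on f^L f, then the counit f^L f → id) equals σ. -/
import Mathlib

open CategoryTheory CategoryTheory.Limits CategoryTheory.Pretriangulated

universe v₁ v₂ u₁ u₂

namespace Stmt13

structure SphData {D : Type u₁} {E : Type u₂} [Category.{v₁} D] [Category.{v₂} E]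
    [HasZeroObject D] [HasZeroObject E] [Preadditive D] [Preadditive E]
    [HasShift D ℤ] [HasShift E ℤ]
    [∀ n : ℤ, (CategoryTheory.shiftFunctor D n).Additive]
    [∀ n : ℤ, (CategoryTheory.shiftFunctor E n).Additive]
    [Pretriangulated D] [Pretriangulated E] (f : D ⥤ E) where
  fL : E ⥤ D
  fR : E ⥤ D
  adjL : fL ⊣ f
  adjR : f ⊣ fR
  t : E ⥤ E
  η : 𝟭 E ⟶ t
  t_tri : ∀ X : E, ∃ h : t.obj X ⟶ (f.obj (fR.obj X))⟦(1 : ℤ)⟧,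
    Triangle.mk (adjR.counit.app X) (η.app X) h ∈ distTriang E
  c : D ⥤ D
  ε : c ⟶ 𝟭 D
  σ : (f ⋙ fR) ⟶ (c ⋙ CategoryTheory.shiftFunctor D (1 : ℤ))
  c_tri : ∀ X : D,
    Triangle.mk (ε.app X) (adjR.unit.app X) (σ.app X) ∈ distTriang D
  t_equiv : t.IsEquivalence
  c_equiv : c.IsEquivalence

variable {DA : Type u₁} {DB : Type u₂} [Category.{v₁} DA] [Category.{v₂} DB]
  [HasZeroObject DA] [HasZeroObject DB] [Preadditive DA] [Preadditive DB]
  [HasShift DA ℤ] [HasShift DB ℤ]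
  [∀ n : ℤ, (CategoryTheory.shiftFunctor DA n).Additive]
  [∀ n : ℤ, (CategoryTheory.shiftFunctor DB n).Additive]
  [Pretriangulated DA] [Pretriangulated DB]

/-- for a spherical functor `f : D(A) ⥤ D(B)`, under the canonical
isomorphism `fᴿ ≅ c_f fᴸ [1]` the map `σ : fᴿ f → c_f[1]` is identified with the counit
`fᴸ f → id`: the composite
`fᴿ f → fᴿ f fᴸ f → c_f fᴸ f [1] → c_f [1]`
(unit of `fᴸ ⊣ f`, then `σ` at `fᴸ f`, then the counit of `fᴸ ⊣ f`) equals `σ`. -/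
theorem sigma_is_counit (f : DA ⥤ DB) (S : SphData f) (X : DA) :
    S.fR.map (S.adjL.unit.app (f.obj X)) ≫ S.σ.app (S.fL.obj (f.obj X)) ≫
      (CategoryTheory.shiftFunctor DA (1 : ℤ)).map (S.c.map (S.adjL.counit.app X)) =
    S.σ.app X := by
  have h := S.σ.naturality (S.adjL.counit.app X)
  simp only [Functor.comp_map, Functor.comp_obj, Functor.id_obj] at h
  rw [← h, ← Category.assoc, ← S.fR.map_comp, S.adjL.right_triangle_components]
  simp

end Stmt13
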